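/- arXiv:0712.1142 — 2 statements merged into one kernel-verified Lean document; each statement's English description precedes it below -/
import Mathlib

section
/- The set Per(S) and, for every ε ∈ Ô, the set Per_ε(S) are additive subgroups of M̄ satisfying r(Per(S)) ⊆ Per(S) and r(Per_ε(S)) ⊆ Per_ε(S) for every r ∈ R. More generally, every continuous additive group endomorphism r of M̄ with r ∘ t = t ∘ r for all t ∈ T(S) maps Per(S) into itself. -/
open Set Filter Topology Pointwise

/-- The set of all finite compositions of elements of `T1`, including the identity. -/
def TS {M : Type*} [AddCommGroup M] (T1 : Set (AddMonoid.End M)) : Set (AddMonoid.End M) :=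
  ↑(Submonoid.closure T1)

/-- Smallest topologically closed additive subgroup containing `Z` and stable under `R`. -/
def Cspan {M : Type*} [AddCommGroup M] [TopologicalSpace M]
    (R : Set (AddMonoid.End M)) (Z : Set M) : Set M :=
  ⋂₀ {N : Set M | Z ⊆ N ∧ IsClosed N ∧ (∃ H : AddSubgroup M, N = ↑H) ∧
      ∀ r ∈ R, ∀ a ∈ N, r a ∈ N}

def IrrS {M : Type*} [AddCommGroup M] (T1 : Set (AddMonoid.End M)) : Set M :=
  {a | ∀ t ∈ TS T1, t a = a}

def IS {M : Type*} [AddCommGroup M] [TopologicalSpace M]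
    (T1 : Set (AddMonoid.End M)) : Set M :=
  closure (AddSubgroup.closure {x : M | ∃ a : M, ∃ t ∈ TS T1, x = a - t a} : Set M)

def Stuck {M : Type*} [AddCommGroup M] (T1 : Set (AddMonoid.End M)) (N : Set M) (a : M) :
    Prop :=
  ∀ t ∈ TS T1, t a ∈ N

def PerE {M : Type*} [AddCommGroup M] (T1 : Set (AddMonoid.End M)) (ε : Set M) : Set M :=
  {a | ∀ t1 ∈ TS T1, ∃ t2 ∈ TS T1, ∃ b ∈ IrrS T1,
    Stuck T1 {x | x - b ∈ ε} (t2 (t1 a))}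

def Per {M : Type*} [AddCommGroup M] (T1 : Set (AddMonoid.End M))
    (B : ℕ → AddSubgroup M) : Set M :=
  ⋂ n, PerE T1 (B n)

def UniqE {M : Type*} [AddCommGroup M] (T1 : Set (AddMonoid.End M)) (ε : Set M) : Set M :=
  {a | ∀ t1 ∈ TS T1, ∀ t2 ∈ TS T1, ∀ b1 ∈ IrrS T1, ∀ b2 ∈ IrrS T1,
    Stuck T1 {x | x - b1 ∈ ε} (t1 a) → Stuck T1 {x | x - b2 ∈ ε} (t2 a) → b1 - b2 ∈ ε}

def RedE {M : Type*} [AddCommGroup M] (T1 : Set (AddMonoid.End M))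
    (B : ℕ → AddSubgroup M) (ε : Set M) : Set M :=
  Per T1 B ∩ UniqE T1 ε

def Red {M : Type*} [AddCommGroup M] (T1 : Set (AddMonoid.End M))
    (B : ℕ → AddSubgroup M) : Set M :=
  ⋂ n, RedE T1 B (B n)

def Equicont {M : Type*} [AddCommGroup M] (T1 : Set (AddMonoid.End M))
    (B : ℕ → AddSubgroup M) : Prop :=
  ∀ n : ℕ, ∃ m : ℕ, ∀ t ∈ TS T1, ∀ a ∈ B m, t a ∈ B n

def DSM {M : Type*} [AddCommGroup M] [TopologicalSpace M]
    (R : Set (AddMonoid.End M)) (Y : Set M) (P : M → M → Prop) (μ : M) : Set M :=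
  Cspan R {ν | ν ∈ Y ∧ P ν μ}

def Compatible {M : Type*} [AddCommGroup M] [TopologicalSpace M]
    (R : Set (AddMonoid.End M)) (Y : Set M) (P : M → M → Prop)
    (t : AddMonoid.End M) : Prop :=
  ∀ μ ∈ Y, t μ = μ ∨ t μ ∈ DSM R Y P μ

def DIS {M : Type*} [AddCommGroup M] [TopologicalSpace M]
    (R : Set (AddMonoid.End M)) (Y : Set M) (P : M → M → Prop)
    (T1 : Set (AddMonoid.End M)) (μ : M) : Set M :=
  Cspan R {x | ∃ ν ∈ Y, P ν μ ∧ ∃ t ∈ T1, x = ν - t ν}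

def TDCC {M : Type*} [AddCommGroup M] [TopologicalSpace M]
    (Y : Set M) (P : M → M → Prop) : Prop :=
  ∀ μ : ℕ → M, (∀ n, μ n ∈ Y) → (∀ n, P (μ (n + 1)) (μ n)) →
    Filter.Tendsto μ Filter.atTop (nhds 0)

/-!
The argument is purely algebraic. If `a` and `a'` are persistently reducible, first reduce `a` into a
coset `b + ε`, then reduce further until `a'` lands in some `b' + ε`; since being stuck is
preserved by further reductions, `a + a'` is then stuck in `b + b' + ε` (negation is similar).
An endomorphism `r` commuting with `T(S)` carries the witnesses `t₂, b` for `a` to witnesses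
`t₂, r b` for `r a`, so it maps `Per_δ` into `Per_ε` whenever `r δ ⊆ ε`; elements of `R` do this
with `δ = ε`, and a continuous `r` with some `δ` because the `ε` form a basis at `0`.
-/

section Persistence

variable {M : Type*} [AddCommGroup M] {T1 : Set (AddMonoid.End M)}

lemma one_mem_TS : (1 : AddMonoid.End M) ∈ TS T1 := Submonoid.one_mem _

lemma mul_mem_TS {s t : AddMonoid.End M} (hs : s ∈ TS T1) (ht : t ∈ TS T1) :
    s * t ∈ TS T1 :=
  Submonoid.mul_mem _ hs ht

lemma apply_comm_of_mem_TS {r : AddMonoid.End M} (hr : ∀ t ∈ T1, ∀ a, r (t a) = t (r a)) :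
    ∀ t ∈ TS T1, ∀ a, r (t a) = t (r a) := by
  have hT1 : T1 ⊆ Submonoid.centralizer {r} := fun t ht =>
    Submonoid.mem_centralizer_iff.mpr fun _ hr' => by
      rw [Set.mem_singleton_iff.mp hr']
      exact DFunLike.ext _ _ (hr t ht)
  intro t ht a
  have hrt : r * t = t * r :=
    Submonoid.mem_centralizer_iff.mp (Submonoid.closure_le.mpr hT1 ht) r rfl
  exact DFunLike.congr_fun hrt a

def irrSubgroup (T1 : Set (AddMonoid.End M)) : AddSubgroup M where
  carrier := IrrS T1
  zero_mem' t _ := map_zero t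
  add_mem' ha hb t ht := by rw [map_add, ha t ht, hb t ht]
  neg_mem' ha t ht := by rw [map_neg, ha t ht]

lemma Stuck.apply {N : Set M} {a : M} (h : Stuck T1 N a) {s : AddMonoid.End M}
    (hs : s ∈ TS T1) : Stuck T1 N (s a) :=
  fun t ht => h (t * s) (mul_mem_TS ht hs)

lemma Stuck.add {E : AddSubgroup M} {a a' b b' : M}
    (h : Stuck T1 {x | x - b ∈ (E : Set M)} a) (h' : Stuck T1 {x | x - b' ∈ (E : Set M)} a') :
    Stuck T1 {x | x - (b + b') ∈ (E : Set M)} (a + a') :=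
  fun t ht => by
    simpa only [mem_ofPred_eq, SetLike.mem_coe, map_add, add_sub_add_comm] using
      E.add_mem (h t ht) (h' t ht)

lemma Stuck.neg {E : AddSubgroup M} {a b : M} (h : Stuck T1 {x | x - b ∈ (E : Set M)} a) :
    Stuck T1 {x | x - -b ∈ (E : Set M)} (-a) :=
  fun t ht => by simpa only [mem_ofPred_eq, SetLike.mem_coe, map_neg, sub_neg_eq_add, neg_sub,
    neg_add_eq_sub] using E.neg_mem (h t ht)

lemma Stuck.map {r : AddMonoid.End M} (hr : ∀ t ∈ TS T1, ∀ a, r (t a) = t (r a))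
    {E E' : AddSubgroup M} (hEE' : ∀ x ∈ E', r x ∈ E) {a b : M}
    (h : Stuck T1 {x | x - b ∈ (E' : Set M)} a) : Stuck T1 {x | x - r b ∈ (E : Set M)} (r a) :=
  fun t ht => by
    simpa only [mem_ofPred_eq, SetLike.mem_coe, map_sub, hr t ht] using hEE' _ (h t ht)

lemma add_mem_PerE {E : AddSubgroup M} {a a' : M} (ha : a ∈ PerE T1 E)
    (ha' : a' ∈ PerE T1 E) : a + a' ∈ PerE T1 E := by
  intro t1 ht1
  obtain ⟨t2, ht2, b, hb, hab⟩ := ha t1 ht1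
  obtain ⟨t3, ht3, b', hb', hab'⟩ := ha' (t2 * t1) (mul_mem_TS ht2 ht1)
  refine ⟨t3 * t2, mul_mem_TS ht3 ht2, b + b', (irrSubgroup T1).add_mem hb hb', ?_⟩
  simpa only [AddMonoid.End.coe_mul, Function.comp_apply, map_add] using
    (hab.apply ht3).add hab'

def perESubgroup (T1 : Set (AddMonoid.End M)) (E : AddSubgroup M) : AddSubgroup M where
  carrier := PerE T1 E
  zero_mem' _ _ :=
    ⟨1, one_mem_TS, 0, (irrSubgroup T1).zero_mem, fun t _ => by simp⟩
  add_mem' := add_mem_PerE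
  neg_mem' ha t1 ht1 := by
    obtain ⟨t2, ht2, b, hb, hab⟩ := ha t1 ht1
    exact ⟨t2, ht2, -b, (irrSubgroup T1).neg_mem hb, by simpa only [map_neg] using hab.neg⟩

def perSubgroup (T1 : Set (AddMonoid.End M)) (B : ℕ → AddSubgroup M) : AddSubgroup M :=
  ⨅ n, perESubgroup T1 (B n)

lemma coe_perSubgroup (B : ℕ → AddSubgroup M) : (perSubgroup T1 B : Set M) = Per T1 B := by
  rw [perSubgroup, AddSubgroup.coe_iInf]
  rfl

lemma map_mem_PerE {r : AddMonoid.End M} (hr : ∀ t ∈ TS T1, ∀ a, r (t a) = t (r a))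
    {E E' : AddSubgroup M} (hEE' : ∀ x ∈ E', r x ∈ E) {a : M} (ha : a ∈ PerE T1 E') :
    r a ∈ PerE T1 E := by
  intro t1 ht1
  obtain ⟨t2, ht2, b, hb, hab⟩ := ha t1 ht1
  refine ⟨t2, ht2, r b, fun t ht => by rw [← hr t ht, hb t ht], ?_⟩
  simpa only [hr t1 ht1, hr t2 ht2] using hab.map hr hEE'

lemma map_mem_Per {B : ℕ → AddSubgroup M} {r : AddMonoid.End M}
    (hr : ∀ t ∈ TS T1, ∀ a, r (t a) = t (r a)) (hB : ∀ n, ∃ m, ∀ x ∈ B m, r x ∈ B n)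
    {a : M} (ha : a ∈ Per T1 B) : r a ∈ Per T1 B :=
  mem_iInter.mpr fun n =>
    let ⟨m, hm⟩ := hB n
    map_mem_PerE hr hm (mem_iInter.mp ha m)

end Persistence

theorem Per_is_module_general
    {M : Type*} [AddCommGroup M] [UniformSpace M]
    (B : ℕ → AddSubgroup M)
    (hBbasis : (nhds (0 : M)).HasBasis (fun _ : ℕ => True) (fun n => (B n : Set M)))
    (R : Set (AddMonoid.End M))
    (hRsmall : ∀ r ∈ R, ∀ n : ℕ, ∀ a ∈ B n, r a ∈ B n)
    (T1 : Set (AddMonoid.End M))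
    (hT1comm : ∀ t ∈ T1, ∀ r ∈ R, ∀ a : M, t (r a) = r (t a)) :
    (∃ H : AddSubgroup M, (H : Set M) = Per T1 B) ∧
    (∀ n : ℕ, ∃ H : AddSubgroup M, (H : Set M) = PerE T1 (B n)) ∧
    (∀ r ∈ R, ∀ a ∈ Per T1 B, r a ∈ Per T1 B) ∧
    (∀ r ∈ R, ∀ n : ℕ, ∀ a ∈ PerE T1 (B n), r a ∈ PerE T1 (B n)) ∧
    (∀ r : AddMonoid.End M, Continuous r →
      (∀ t ∈ TS T1, ∀ a : M, r (t a) = t (r a)) →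
      ∀ a ∈ Per T1 B, r a ∈ Per T1 B) := by
  have hR : ∀ r ∈ R, ∀ t ∈ TS T1, ∀ a, r (t a) = t (r a) := fun r hr =>
    apply_comm_of_mem_TS fun t ht a => (hT1comm t ht r hr a).symm
  refine ⟨⟨perSubgroup T1 B, coe_perSubgroup B⟩, fun n => ⟨perESubgroup T1 (B n), rfl⟩,
    fun r hr _ => map_mem_Per (hR r hr) fun n => ⟨n, hRsmall r hr n⟩,
    fun r hr n _ => map_mem_PerE (hR r hr) (hRsmall r hr n),
    fun r hrcont hrcomm _ => map_mem_Per hrcomm fun n => ?_⟩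
  have hr0 : Tendsto r (𝓝 0) (𝓝 0) := by
    simpa only [map_zero] using hrcont.tendsto 0
  simpa only [true_and, forall_const, SetLike.mem_coe] using
    (hBbasis.tendsto_iff hBbasis).mp hr0 n

theorem Per_is_module
    {M : Type*} [AddCommGroup M] [UniformSpace M] [IsUniformAddGroup M]
    [CompleteSpace M] [T2Space M]
    (B : ℕ → AddSubgroup M)
    (hBopen : ∀ n, IsOpen (B n : Set M))
    (hBanti : ∀ n, (B (n + 1) : Set M) ⊆ (B n : Set M))
    (hBbasis : (nhds (0 : M)).HasBasis (fun _ : ℕ => True) (fun n => (B n : Set M)))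
    (hBsep : ⋂ n, (B n : Set M) = {0})
    (R : Set (AddMonoid.End M))
    (hRcont : ∀ r ∈ R, Continuous r)
    (hRsmall : ∀ r ∈ R, ∀ n : ℕ, ∀ a ∈ B n, r a ∈ B n)
    (T1 : Set (AddMonoid.End M))
    (hT1cont : ∀ t ∈ T1, Continuous t)
    (hT1comm : ∀ t ∈ T1, ∀ r ∈ R, ∀ a : M, t (r a) = r (t a)) :
    (∃ H : AddSubgroup M, (H : Set M) = Per T1 B) ∧
    (∀ n : ℕ, ∃ H : AddSubgroup M, (H : Set M) = PerE T1 (B n)) ∧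
    (∀ r ∈ R, ∀ a ∈ Per T1 B, r a ∈ Per T1 B) ∧
    (∀ r ∈ R, ∀ n : ℕ, ∀ a ∈ PerE T1 (B n), r a ∈ PerE T1 (B n)) ∧
    (∀ r : AddMonoid.End M, Continuous r →
      (∀ t ∈ TS T1, ∀ a : M, r (t a) = t (r a)) →
      ∀ a ∈ Per T1 B, r a ∈ Per T1 B) :=
  Per_is_module_general B hBbasis R hRsmall T1 hT1comm
end

section
/- The set I(S) is a topologically closed additive subgroup of M̄ with r(I(S)) ⊆ I(S) for every r ∈ R. More generally, every advanceable continuous additive group endomorphism of M̄ maps I(S) into itself. Every reduction t ∈ T(S) maps I(S) into itself, and in particular ker t ⊆ I(S) for every t ∈ T(S). Furthermore, I(S) equals the topological closure of the additive subgroup of M̄ generated by {a − t(a) : a ∈ M̄, t ∈ T1(S)}, and I(S) = Cspan({μ − t(μ) : μ ∈ Y, t ∈ T1(S)}). -/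
open Set Filter Topology Pointwise

/-- `R*Y`: images of elements of `Y` under finite compositions of elements of `R`. -/
def RstarY {M : Type*} [AddCommGroup M] (R : Set (AddMonoid.End M)) (Y : Set M) : Set M :=
  {b | ∃ r ∈ (Submonoid.closure R : Submonoid (AddMonoid.End M)), ∃ μ ∈ Y, b = r μ}

/-- A map is advanceable with respect to `T1` if it can be advanced past simple
reductions on elements of `R*Y`. -/
def Advanceable {M : Type*} [AddCommGroup M] (R : Set (AddMonoid.End M)) (Y : Set M)
    (T1 : Set (AddMonoid.End M)) (v : AddMonoid.End M) : Prop :=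
  ∀ t ∈ T1, ∀ b ∈ RstarY R Y, ∃ u ∈ TS T1, u (v b) = v (t b)

/-!
Write `D` for the differences `a - t a`. The identity `a - (u * w) a = (a - w a) + (w a - u (w a))`
shows that the differences along `TS T1` and along `T1` generate the same subgroup. A continuous
endomorphism preserves `IS T1 = closure ⟨D⟩` as soon as it maps `D` into it; this covers the maps
commuting with `T1`, in particular `R`, and the reductions. For `t ∈ T1` the set
`{a | a - t a ∈ Cspan R {μ - t μ}}` is a closed `R`-stable subgroup containing `Y`, hence all of `M`,
so `IS T1` is that `Cspan`.
-/

section Reductions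

variable {M : Type*} [AddCommGroup M]

lemma apply_comm_of_mem_closure {S : Set (AddMonoid.End M)} {t : AddMonoid.End M}
    (h : ∀ s ∈ S, ∀ a, t (s a) = s (t a)) {r : AddMonoid.End M}
    (hr : r ∈ Submonoid.closure S) (a : M) : t (r a) = r (t a) := by
  have hle : Submonoid.closure S ≤ Submonoid.centralizer {t} :=
    Submonoid.closure_le.2 fun s hs => Submonoid.mem_centralizer_iff.2 fun _ hu => by
      rw [Set.mem_singleton_iff.1 hu]; exact AddMonoidHom.ext (h s hs)
  exact DFunLike.congr_fun (Submonoid.mem_centralizer_iff.1 (hle hr) t rfl) a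

lemma continuous_of_mem_TS {T1 : Set (AddMonoid.End M)} [TopologicalSpace M]
    (hT1cont : ∀ t ∈ T1, Continuous t) {t : AddMonoid.End M} (ht : t ∈ TS T1) :
    Continuous t := by
  induction ht using Submonoid.closure_induction with
  | mem u hu => exact hT1cont u hu
  | one => exact continuous_id
  | mul u w _ _ hu hw => exact hu.comp hw

lemma sub_apply_mem_closure_of_mem_TS {T1 : Set (AddMonoid.End M)} {t : AddMonoid.End M}
    (ht : t ∈ TS T1) (a : M) :
    a - t a ∈ AddSubgroup.closure {x : M | ∃ a : M, ∃ t ∈ T1, x = a - t a} := by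
  induction ht using Submonoid.closure_induction generalizing a with
  | mem u hu => exact AddSubgroup.subset_closure ⟨a, u, hu, rfl⟩
  | one => simp
  | mul u w _ _ hu hw =>
    rw [AddMonoid.End.coe_mul, Function.comp_apply, ← sub_add_sub_cancel a (w a)]
    exact add_mem (hw a) (hu (w a))

lemma closure_sub_TS_eq (T1 : Set (AddMonoid.End M)) :
    AddSubgroup.closure {x : M | ∃ a : M, ∃ t ∈ TS T1, x = a - t a} =
      AddSubgroup.closure {x : M | ∃ a : M, ∃ t ∈ T1, x = a - t a} := by
  refine le_antisymm (AddSubgroup.closure_le _ |>.2 ?_) (AddSubgroup.closure_mono ?_)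
  · rintro _ ⟨a, t, ht, rfl⟩
    exact sub_apply_mem_closure_of_mem_TS ht a
  · rintro _ ⟨a, t, ht, rfl⟩
    exact ⟨a, t, Submonoid.subset_closure ht, rfl⟩

end Reductions

section Closure

variable {M : Type*} [AddCommGroup M] [TopologicalSpace M] [IsTopologicalAddGroup M]

lemma map_mem_closure_addSubgroupClosure {S S' : Set M} {v : AddMonoid.End M}
    (hv : Continuous v) (h : ∀ x ∈ S, v x ∈ closure (AddSubgroup.closure S' : Set M))
    {a : M} (ha : a ∈ closure (AddSubgroup.closure S : Set M)) :
    v a ∈ closure (AddSubgroup.closure S' : Set M) := by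
  let K : AddSubgroup M := (AddSubgroup.closure S').topologicalClosure.comap v
  have hK : IsClosed (K : Set M) := isClosed_closure.preimage hv
  have hle : AddSubgroup.closure S ≤ K := (AddSubgroup.closure_le K).2 h
  exact AddSubgroup.topologicalClosure_minimal _ hle hK ha

end Closure

section Cspan

variable {M : Type*} [AddCommGroup M] [TopologicalSpace M] {R : Set (AddMonoid.End M)}
  {Z : Set M}

lemma mem_Cspan {a : M} :
    a ∈ Cspan R Z ↔ ∀ H : AddSubgroup M, Z ⊆ H → IsClosed (H : Set M) →
      (∀ r ∈ R, ∀ b ∈ H, r b ∈ H) → a ∈ H := by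
  refine ⟨fun ha H hZ hH hR => Set.mem_sInter.1 ha H ⟨hZ, hH, ⟨H, rfl⟩, hR⟩, fun ha => ?_⟩
  rintro _ ⟨hZ, hH, ⟨H, rfl⟩, hR⟩
  exact ha H hZ hH hR

variable (R Z) in
def cspanAddSubgroup : AddSubgroup M where
  carrier := Cspan R Z
  zero_mem' := mem_Cspan.2 fun H _ _ _ => H.zero_mem
  add_mem' ha hb := mem_Cspan.2 fun H hZ hH hR =>
    H.add_mem (mem_Cspan.1 ha H hZ hH hR) (mem_Cspan.1 hb H hZ hH hR)
  neg_mem' ha := mem_Cspan.2 fun H hZ hH hR => H.neg_mem (mem_Cspan.1 ha H hZ hH hR)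

lemma Cspan_subset {H : AddSubgroup M} (hZ : Z ⊆ H) (hH : IsClosed (H : Set M))
    (hR : ∀ r ∈ R, ∀ b ∈ H, r b ∈ H) : Cspan R Z ⊆ H :=
  fun _ ha => mem_Cspan.1 ha H hZ hH hR

lemma subset_Cspan : Z ⊆ Cspan R Z :=
  fun _ hz => mem_Cspan.2 fun _ hZ _ _ => hZ hz

lemma isClosed_Cspan : IsClosed (Cspan R Z) :=
  isClosed_sInter fun _ hN => hN.2.1

lemma apply_mem_Cspan {r : AddMonoid.End M} (hr : r ∈ R) {a : M} (ha : a ∈ Cspan R Z) :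
    r a ∈ Cspan R Z :=
  mem_Cspan.2 fun H hZ hH hR => hR r hr a (mem_Cspan.1 ha H hZ hH hR)

lemma Cspan_subset_closure_RstarY [IsTopologicalAddGroup M] (hRcont : ∀ r ∈ R, Continuous r) :
    Cspan R Z ⊆ closure (AddSubgroup.closure (RstarY R Z) : Set M) := by
  refine Cspan_subset (H := (AddSubgroup.closure (RstarY R Z)).topologicalClosure)
    (fun z hz => subset_closure (AddSubgroup.subset_closure ⟨1, one_mem _, z, hz, rfl⟩))
    isClosed_closure fun r hr b hb => map_mem_closure_addSubgroupClosure (hRcont r hr) ?_ hb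
  rintro _ ⟨r', hr', z, hz, rfl⟩
  exact subset_closure (AddSubgroup.subset_closure
    ⟨r * r', mul_mem (Submonoid.subset_closure hr) hr', z, hz, rfl⟩)

end Cspan

section IS

variable {M : Type*} [AddCommGroup M] [TopologicalSpace M] {R T1 : Set (AddMonoid.End M)}
  {Y : Set M}

lemma IS_eq_closure_of_T1 (T1 : Set (AddMonoid.End M)) :
    IS T1 = closure (AddSubgroup.closure {x : M | ∃ a : M, ∃ t ∈ T1, x = a - t a} : Set M) := by
  rw [IS, closure_sub_TS_eq]

lemma mem_IS_of_apply_eq_zero {t : AddMonoid.End M} (ht : t ∈ TS T1) {a : M} (h : t a = 0) :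
    a ∈ IS T1 := by
  have hdiff : a - t a ∈ AddSubgroup.closure {x : M | ∃ a : M, ∃ t ∈ TS T1, x = a - t a} :=
    AddSubgroup.subset_closure ⟨a, t, ht, rfl⟩
  rw [h, sub_zero] at hdiff
  exact subset_closure hdiff

variable [IsTopologicalAddGroup M]

lemma map_mem_IS_of_commute {v : AddMonoid.End M} (hv : Continuous v)
    (hcomm : ∀ t ∈ T1, ∀ a, v (t a) = t (v a)) {a : M} (ha : a ∈ IS T1) : v a ∈ IS T1 := by
  refine map_mem_closure_addSubgroupClosure hv ?_ ha
  rintro _ ⟨b, t, ht, rfl⟩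
  rw [map_sub, apply_comm_of_mem_closure hcomm ht]
  exact subset_closure (AddSubgroup.subset_closure ⟨v b, t, ht, rfl⟩)

lemma map_mem_IS_of_mem_TS (hT1cont : ∀ t ∈ T1, Continuous t) {t : AddMonoid.End M}
    (ht : t ∈ TS T1) {a : M} (ha : a ∈ IS T1) : t a ∈ IS T1 := by
  refine map_mem_closure_addSubgroupClosure (continuous_of_mem_TS hT1cont ht) ?_ ha
  rintro _ ⟨b, u, hu, rfl⟩
  have htu : t (b - u b) = (b - (t * u) b) - (b - t b) := by
    rw [map_sub, AddMonoid.End.coe_mul, Function.comp_apply]; abel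
  rw [htu]
  exact subset_closure (sub_mem (AddSubgroup.subset_closure ⟨b, t * u, mul_mem ht hu, rfl⟩)
    (AddSubgroup.subset_closure ⟨b, t, ht, rfl⟩))

lemma sub_apply_mem_Cspan (hT1cont : ∀ t ∈ T1, Continuous t)
    (hT1comm : ∀ t ∈ T1, ∀ r ∈ R, ∀ a : M, t (r a) = r (t a))
    (hYspan : Cspan R Y = Set.univ) {t : AddMonoid.End M} (ht : t ∈ T1) (a : M) :
    a - t a ∈ Cspan R {x : M | ∃ μ ∈ Y, ∃ t ∈ T1, x = μ - t μ} := by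
  let K := (cspanAddSubgroup R {x : M | ∃ μ ∈ Y, ∃ t ∈ T1, x = μ - t μ}).comap (1 - t)
  have hK : Cspan R Y ⊆ K := by
    refine Cspan_subset (fun μ hμ => subset_Cspan ⟨μ, hμ, t, ht, rfl⟩)
      (isClosed_Cspan.preimage (continuous_id.sub (hT1cont t ht))) fun r hr b hb => ?_
    change r b - t (r b) ∈ Cspan R _
    rw [hT1comm t ht r hr, ← map_sub]
    exact apply_mem_Cspan hr hb
  exact hK (hYspan ▸ Set.mem_univ a)

lemma IS_eq_Cspan (hRcont : ∀ r ∈ R, Continuous r) (hT1cont : ∀ t ∈ T1, Continuous t)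
    (hT1comm : ∀ t ∈ T1, ∀ r ∈ R, ∀ a : M, t (r a) = r (t a))
    (hYspan : Cspan R Y = Set.univ) :
    IS T1 = Cspan R {x : M | ∃ μ ∈ Y, ∃ t ∈ T1, x = μ - t μ} := by
  refine Set.Subset.antisymm ?_ ?_
  · rw [IS_eq_closure_of_T1]
    refine closure_minimal ((AddSubgroup.closure_le (cspanAddSubgroup R _)).2 ?_) isClosed_Cspan
    rintro _ ⟨a, t, ht, rfl⟩
    exact sub_apply_mem_Cspan hT1cont hT1comm hYspan ht a
  · refine Cspan_subset (H := (AddSubgroup.closure _).topologicalClosure) ?_ isClosed_closure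
      fun r hr b hb => map_mem_IS_of_commute (hRcont r hr)
        (fun t ht a => (hT1comm t ht r hr a).symm) hb
    rintro _ ⟨μ, -, t, ht, rfl⟩
    exact subset_closure (AddSubgroup.subset_closure ⟨μ, t, Submonoid.subset_closure ht, rfl⟩)

/-- `Cspan` lies in the closed subgroup generated by the translates `r (μ - t μ) = r μ - t (r μ)`,
`r ∈ R*`, and advanceability turns `v` of these into `v (r μ) - u (v (r μ))`. -/
lemma map_mem_IS_of_advanceable (hRcont : ∀ r ∈ R, Continuous r)
    (hT1comm : ∀ t ∈ T1, ∀ r ∈ R, ∀ a : M, t (r a) = r (t a)) {v : AddMonoid.End M}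
    (hv : Continuous v) (hadv : Advanceable R Y T1 v) {a : M}
    (ha : a ∈ Cspan R {x : M | ∃ μ ∈ Y, ∃ t ∈ T1, x = μ - t μ}) : v a ∈ IS T1 := by
  refine map_mem_closure_addSubgroupClosure hv ?_ (Cspan_subset_closure_RstarY hRcont ha)
  rintro _ ⟨r, hr, _, ⟨μ, hμ, t, ht, rfl⟩, rfl⟩
  obtain ⟨u, hu, huv⟩ := hadv t ht (r μ) ⟨r, hr, μ, hμ, rfl⟩
  rw [map_sub, ← apply_comm_of_mem_closure (hT1comm t ht) hr, map_sub, ← huv]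
  exact subset_closure (AddSubgroup.subset_closure ⟨v (r μ), u, hu, rfl⟩)

end IS

theorem IS_closure_properties_general
    {M : Type*} [AddCommGroup M] [UniformSpace M] [IsUniformAddGroup M]
    (R : Set (AddMonoid.End M))
    (hRcont : ∀ r ∈ R, Continuous r)
    (T1 : Set (AddMonoid.End M))
    (hT1cont : ∀ t ∈ T1, Continuous t)
    (hT1comm : ∀ t ∈ T1, ∀ r ∈ R, ∀ a : M, t (r a) = r (t a))
    (Y : Set M)
    (hYspan : Cspan R Y = (Set.univ : Set M)) :
    IsClosed (IS T1) ∧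
    (∃ H : AddSubgroup M, (H : Set M) = IS T1) ∧
    (∀ r ∈ R, ∀ a ∈ IS T1, r a ∈ IS T1) ∧
    (∀ v : AddMonoid.End M, Continuous v → Advanceable R Y T1 v →
      ∀ a ∈ IS T1, v a ∈ IS T1) ∧
    (∀ t ∈ TS T1, ∀ a ∈ IS T1, t a ∈ IS T1) ∧
    (∀ t ∈ TS T1, ∀ a : M, t a = 0 → a ∈ IS T1) ∧
    IS T1 = closure (AddSubgroup.closure
      {x : M | ∃ a : M, ∃ t ∈ T1, x = a - t a} : Set M) ∧
    IS T1 = Cspan R {x : M | ∃ μ ∈ Y, ∃ t ∈ T1, x = μ - t μ} := by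
  have hIS := IS_eq_Cspan hRcont hT1cont hT1comm hYspan
  refine ⟨isClosed_closure, ⟨_, AddSubgroup.topologicalClosure_coe⟩, ?_, ?_, ?_, ?_,
    IS_eq_closure_of_T1 T1, hIS⟩
  · exact fun r hr a => map_mem_IS_of_commute (hRcont r hr) fun t ht b => (hT1comm t ht r hr b).symm
  · exact fun v hv hadv a ha => map_mem_IS_of_advanceable hRcont hT1comm hv hadv (hIS ▸ ha)
  · exact fun t ht a => map_mem_IS_of_mem_TS hT1cont ht
  · exact fun t ht a => mem_IS_of_apply_eq_zero ht

theorem IS_closure_properties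
    {M : Type*} [AddCommGroup M] [UniformSpace M] [IsUniformAddGroup M]
    [CompleteSpace M] [T2Space M]
    (B : ℕ → AddSubgroup M)
    (hBopen : ∀ n, IsOpen (B n : Set M))
    (hBanti : ∀ n, (B (n + 1) : Set M) ⊆ (B n : Set M))
    (hBbasis : (nhds (0 : M)).HasBasis (fun _ : ℕ => True) (fun n => (B n : Set M)))
    (hBsep : ⋂ n, (B n : Set M) = {0})
    (R : Set (AddMonoid.End M))
    (hRcont : ∀ r ∈ R, Continuous r)
    (hRsmall : ∀ r ∈ R, ∀ n : ℕ, ∀ a ∈ B n, r a ∈ B n)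
    (T1 : Set (AddMonoid.End M))
    (hT1cont : ∀ t ∈ T1, Continuous t)
    (hT1comm : ∀ t ∈ T1, ∀ r ∈ R, ∀ a : M, t (r a) = r (t a))
    (Y : Set M)
    (hYspan : Cspan R Y = (Set.univ : Set M)) :
    IsClosed (IS T1) ∧
    (∃ H : AddSubgroup M, (H : Set M) = IS T1) ∧
    (∀ r ∈ R, ∀ a ∈ IS T1, r a ∈ IS T1) ∧
    (∀ v : AddMonoid.End M, Continuous v → Advanceable R Y T1 v →
      ∀ a ∈ IS T1, v a ∈ IS T1) ∧
    (∀ t ∈ TS T1, ∀ a ∈ IS T1, t a ∈ IS T1) ∧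
    (∀ t ∈ TS T1, ∀ a : M, t a = 0 → a ∈ IS T1) ∧
    IS T1 = closure (AddSubgroup.closure
      {x : M | ∃ a : M, ∃ t ∈ T1, x = a - t a} : Set M) ∧
    IS T1 = Cspan R {x : M | ∃ μ ∈ Y, ∃ t ∈ T1, x = μ - t μ} :=
  IS_closure_properties_general R hRcont T1 hT1cont hT1comm Y hYspan
end
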